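/- arXiv:1307.4933 — 3 statements merged into one kernel-verified Lean document; each statement's English description precedes it below -/
import Mathlib

section
/- For every finite simple graph Γ, every integer l ≥ 4, and every pair of distinct vertices A, B of Γ, the number of l-cycles satisfies the 4-term relation modulo 2: E_l(Γ) − E_l(Γ′_AB) ≡ E_l(Γ̃_AB) − E_l(Γ̃′_AB) (mod 2). -/
open Finset
open scoped Classical

/-- The cyclic successor of an element of `Fin m`. -/
def cyclicSucc {m : ℕ} (a : Fin m) : Fin m :=
  ⟨((a : ℕ) + 1) % m, Nat.mod_lt _ a.pos⟩

/-- The cyclic predecessor of an element of `Fin m`. -/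
def cyclicPred {m : ℕ} (a : Fin m) : Fin m :=
  ⟨((a : ℕ) + (m - 1)) % m, Nat.mod_lt _ a.pos⟩

/-- `f : Fin l → V` traces an `l`-cycle of `G`: it is injective and cyclically
consecutive vertices are adjacent. -/
def IsCycleMap {V : Type} (G : SimpleGraph V) (l : ℕ) (f : Fin l → V) : Prop :=
  Function.Injective f ∧ ∀ i : Fin l, G.Adj (f i) (f (cyclicSucc i))

/-- The number `E_l(G)` of `l`-cycles of `G`, counted up to rotation and reflection
(each such cycle is traced by exactly `2 * l` maps `Fin l → V`). -/
noncomputable def cycleCount {V : Type} [Fintype V] (G : SimpleGraph V) (l : ℕ) : ℕ :=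
  (Finset.univ.filter (fun f : Fin l → V => IsCycleMap G l f)).card / (2 * l)

/-- `o` is an orientation of `G`: every edge gets exactly one direction. -/
def IsOrientation {V : Type} (G : SimpleGraph V) (o : V → V → Prop) : Prop :=
  ∀ ⦃x y : V⦄, G.Adj x y → (o x y ↔ ¬ o y x)

/-- The sign of a cycle map with respect to a direction relation `o`:
`+1` iff the number of edges agreeing with the traversal is even. -/
noncomputable def cycleSign {V : Type} {l : ℕ} (o : V → V → Prop) (f : Fin l → V) : ℤ :=
  (-1) ^ (Finset.univ.filter (fun i : Fin l => o (f i) (f (cyclicSucc i)))).card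

/-- The sum of signs of all `l`-cycles of `G` (counted up to rotation and
reflection) with respect to the direction relation `o`. -/
noncomputable def signedCycleSum {V : Type} [Fintype V] (G : SimpleGraph V)
    (o : V → V → Prop) (l : ℕ) : ℤ :=
  (∑ f ∈ Finset.univ.filter (fun f : Fin l → V => IsCycleMap G l f),
    cycleSign o f) / (2 * (l : ℤ))

/-- The graph `Γ'_AB`: toggle the adjacency between the vertices `A` and `B`. -/
def toggleEdge {V : Type} (G : SimpleGraph V) (A B : V) : SimpleGraph V where
  Adj x y := x ≠ y ∧ (G.Adj x y ↔ ¬((x = A ∧ y = B) ∨ (x = B ∧ y = A)))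
  symm := by
    constructor
    intro x y h
    obtain ⟨h1, h2⟩ := h
    refine ⟨h1.symm, ?_⟩
    rw [G.adj_comm]
    tauto
  loopless := ⟨fun x h => h.1 rfl⟩

/-- The graph `Γ̃_AB`: toggle the adjacency between `A` and every vertex
`C ∉ {A, B}` adjacent to `B` in `Γ`. -/
def tildeGraph {V : Type} (G : SimpleGraph V) (A B : V) : SimpleGraph V where
  Adj x y := x ≠ y ∧
    (G.Adj x y ↔ ¬((x = A ∧ y ≠ B ∧ G.Adj y B) ∨ (y = A ∧ x ≠ B ∧ G.Adj x B)))
  symm := by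
    constructor
    intro x y h
    obtain ⟨h1, h2⟩ := h
    refine ⟨h1.symm, ?_⟩
    rw [G.adj_comm]
    tauto
  loopless := ⟨fun x h => h.1 rfl⟩

/-- A chord diagram of order `n`: a partition of the `2 * n` cyclically ordered
points `0, 1, …, 2n - 1` into `n` two-element blocks (chords), here recorded by
the function assigning to each point its chord. -/
structure ChordDiagram (n : ℕ) where
  chord : Fin (2 * n) → Fin n
  fiber_two : ∀ i : Fin n, (Finset.univ.filter (fun x => chord x = i)).card = 2

namespace ChordDiagram

variable {n : ℕ}

/-- The pair of endpoints of the chord `i`. -/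
def endpoints (d : ChordDiagram n) (i : Fin n) : Finset (Fin (2 * n)) :=
  Finset.univ.filter (fun x => d.chord x = i)

lemma endpoints_nonempty (d : ChordDiagram n) (i : Fin n) : (d.endpoints i).Nonempty := by
  rw [← Finset.card_pos, endpoints, d.fiber_two]
  norm_num

/-- The smaller endpoint of the chord `i`. -/
def lo (d : ChordDiagram n) (i : Fin n) : Fin (2 * n) :=
  (d.endpoints i).min' (d.endpoints_nonempty i)

/-- The larger endpoint of the chord `i`. -/
def hi (d : ChordDiagram n) (i : Fin n) : Fin (2 * n) :=
  (d.endpoints i).max' (d.endpoints_nonempty i)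

/-- Chords `i` and `j` cross: exactly one endpoint of `j` lies strictly between
the two endpoints of `i`. -/
def Crosses (d : ChordDiagram n) (i j : Fin n) : Prop :=
  Xor' (d.lo i < d.lo j ∧ d.lo j < d.hi i) (d.lo i < d.hi j ∧ d.hi j < d.hi i)

/-- The intersection graph `γ(d)` of the chord diagram `d`. -/
def interGraph (d : ChordDiagram n) : SimpleGraph (Fin n) where
  Adj i j := i ≠ j ∧ (d.Crosses i j ∨ d.Crosses j i)
  symm := ⟨fun i j h => ⟨h.1.symm, h.2.symm⟩⟩
  loopless := ⟨fun i h => h.1 rfl⟩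

lemma chord_lo (d : ChordDiagram n) (i : Fin n) : d.chord (d.lo i) = i := by
  have h := (d.endpoints i).min'_mem (d.endpoints_nonempty i)
  exact (Finset.mem_filter.mp h).2

/-- An orientation of a chord diagram: a choice of a beginning point for each
chord (the other endpoint being its end). -/
def Orientation (d : ChordDiagram n) : Type :=
  { b : Fin n → Fin (2 * n) // ∀ i, d.chord (b i) = i }

/-- The end of the chord `i`, i.e. its endpoint other than the beginning. -/
def endOf (d : ChordDiagram n) (o : d.Orientation) (i : Fin n) : Fin (2 * n) :=
  if o.1 i = d.lo i then d.hi i else d.lo i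

/-- The point `z` lies on the arc going in the positive direction from `a` to `b`. -/
def InArc {m : ℕ} (a b z : Fin m) : Prop :=
  if a < b then a < z ∧ z < b else a < z ∨ z < b

/-- The direction induced by an orientation of the chords on the edges of the
intersection graph: the edge between `i` and `j` is directed from `i` to `j`
iff the beginning of `j` lies on the arc going in the positive direction from
the beginning of `i` to the end of `i`. -/
def dir (d : ChordDiagram n) (o : d.Orientation) (i j : Fin n) : Prop :=
  InArc (o.1 i) (d.endOf o i) (o.1 j)

/-- The canonical orientation: every chord begins at its smaller endpoint. -/
def canonical (d : ChordDiagram n) : d.Orientation :=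
  ⟨d.lo, d.chord_lo⟩

end ChordDiagram

/-- The weight system `R_k`: the sum of the signs of the `2k`-cycles of the
directed intersection graph (for the canonical orientation of the chords). -/
noncomputable def Rk (k : ℕ) {n : ℕ} (d : ChordDiagram n) : ℤ :=
  signedCycleSum d.interGraph (d.dir d.canonical) (2 * k)

/-- When the point at position `p` is moved to position `q` (keeping the relative
order of all the other points), `moveFun p q r` is the old position of the point
occupying the position `r` after the move. -/
def moveFun {m : ℕ} (p q : Fin m) (r : Fin m) : Fin m :=
  if r = q then p
  else if h : (p : ℕ) ≤ (r : ℕ) ∧ (r : ℕ) < (q : ℕ) then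
    ⟨(r : ℕ) + 1, by have := q.isLt; omega⟩
  else if h' : (q : ℕ) < (r : ℕ) ∧ (r : ℕ) ≤ (p : ℕ) then
    ⟨(r : ℕ) - 1, by have := r.isLt; omega⟩
  else r

/-- The invariant `w_C`: `1` if the adjacency matrix of the graph over `ZMod 2`
is nondegenerate, `0` otherwise. -/
noncomputable def wC {V : Type} [Fintype V] (G : SimpleGraph V) : ℤ :=
  if (G.adjMatrix (ZMod 2)).det ≠ 0 then 1 else 0

/-- All set partitions of `Fin n` into nonempty blocks. -/
noncomputable def finPartitions (n : ℕ) : Finset (Finset (Finset (Fin n))) :=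
  Finset.univ.filter (fun P =>
    (∀ s ∈ P, s.Nonempty) ∧ ∀ x : Fin n, ∃! s, s ∈ P ∧ x ∈ s)

/-- A `4`-invariant of finite simple graphs: an integer-valued, isomorphism
invariant function satisfying the `4`-term relation for graphs. -/
structure FourInvariant where
  val : ∀ n : ℕ, SimpleGraph (Fin n) → ℤ
  iso_invariant : ∀ {n m : ℕ} (G : SimpleGraph (Fin n)) (H : SimpleGraph (Fin m)),
    Nonempty (G ≃g H) → val n G = val m H
  four_term : ∀ (n : ℕ) (G : SimpleGraph (Fin n)) (A B : Fin n), A ≠ B →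
    val n G - val n (toggleEdge G A B) =
      val n (tildeGraph G A B) - val n (toggleEdge (tildeGraph G A B) A B)

/-- The `5`-wheel: a `5`-cycle on the vertices `0, …, 4` together with the hub `5`
adjacent to all five cycle vertices. -/
def wheel5 : SimpleGraph (Fin 6) :=
  SimpleGraph.fromRel (fun x y =>
    ((x : ℕ) = 5 ∧ (y : ℕ) < 5) ∨
    ((x : ℕ) < 5 ∧ (y : ℕ) < 5 ∧ (y : ℕ) = ((x : ℕ) + 1) % 5))

/-- The triangular prism: two triangles `{0, 1, 2}` and `{3, 4, 5}` joined by the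
perfect matching `i — i + 3`. -/
def prism : SimpleGraph (Fin 6) :=
  SimpleGraph.fromRel (fun x y =>
    ((x : ℕ) < 3 ∧ (y : ℕ) < 3 ∧ x ≠ y) ∨
    (3 ≤ (x : ℕ) ∧ 3 ≤ (y : ℕ) ∧ x ≠ y) ∨
    ((y : ℕ) = (x : ℕ) + 3))


/-!
The cycle maps of `G` that use the edge `AB` are the `2 * l` rotations and reflections of those
starting `A, B`, each obtained exactly once. So when `AB` is an edge, `E_l(G) - E_l(Γ'_AB)` is
the number of injective `A, B, f 2, …, f (l - 1)` whose cyclically consecutive entries are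
adjacent except possibly `A, B`: a count blind to the edge `AB`. If `AB` is not an edge, the
roles of `G` and `Γ'_AB` swap. So modulo `2` the two sides of the relation are this count for
`G` and for `Γ̃_AB`.

Passing from `G` to `Γ̃_AB` only changes the edges at `A` towards neighbours of `B`; the maps
`A, B, f 2, …, f (l - 1)` whose status changes are those with `f (l - 1)` adjacent to `B`. For
them `B, f 2, …, f (l - 1)` is an `(l - 1)`-cycle, and reversing it pairs them off without fixed
points once `l - 1 ≥ 3`.
-/

open Fin.CommRing

lemma Fin.ofNat_ne_zero_of_lt {n k : ℕ} [NeZero n] (hk : 0 < k) (hkn : k < n) :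
    Fin.ofNat n k ≠ 0 := by
  simp [Fin.ext_iff, Nat.mod_eq_of_lt hkn]
  omega

lemma cyclicSucc_eq_add_one {l : ℕ} [NeZero l] (i : Fin l) : cyclicSucc i = i + 1 := by
  ext
  simp [cyclicSucc, Fin.val_add, Nat.add_mod]

lemma Finset.natCast_card_filter_xor {α : Type*} (s : Finset α) (p q : α → Prop) :
    (#(s.filter fun a => Xor (p a) (q a)) : ZMod 2) = #(s.filter p) + #(s.filter q) := by
  simp only [natCast_card_filter, ← sum_add_distrib]
  refine sum_congr rfl fun a _ => ?_
  by_cases hp : p a <;> by_cases hq : q a <;> simp [hp, hq, Xor]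
  decide

lemma Finset.even_card_of_involution {α : Type*} {s : Finset α} (g : α → α)
    (hg : ∀ a ∈ s, g a ∈ s) (hgg : ∀ a ∈ s, g (g a) = a) (hfix : ∀ a ∈ s, g a ≠ a) :
    Even #s := by
  rw [← ZMod.natCast_eq_zero_iff_even, card_eq_sum_ones, Nat.cast_sum, Nat.cast_one]
  exact sum_involution (fun a _ => g a) (fun _ _ => by decide) (fun a ha _ => hfix a ha) hg hgg

section GraphOperations

variable {V : Type} {G : SimpleGraph V} {A B x y : V}

lemma toggleEdge_adj_of_ne (h : s(x, y) ≠ s(A, B)) :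
    (toggleEdge G A B).Adj x y ↔ G.Adj x y := by
  rw [Ne, Sym2.eq_iff] at h
  simp only [toggleEdge, h, not_false_eq_true, iff_true, and_iff_right_iff_imp]
  exact G.ne_of_adj

lemma toggleEdge_adj_of_eq (hAB : A ≠ B) (h : s(x, y) = s(A, B)) :
    (toggleEdge G A B).Adj x y ↔ ¬ G.Adj A B := by
  rw [← G.adj_congr_of_sym2 h]
  rw [Sym2.eq_iff] at h
  simp only [toggleEdge, h, not_true_eq_false, iff_false, and_iff_right_iff_imp]
  rintro -
  rcases h with ⟨rfl, rfl⟩ | ⟨rfl, rfl⟩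
  exacts [hAB, hAB.symm]

lemma toggleEdge_toggleEdge (G : SimpleGraph V) (A B : V) :
    toggleEdge (toggleEdge G A B) A B = G := by
  ext x y
  simp only [toggleEdge]
  have := G.ne_of_adj (a := x) (b := y)
  tauto

lemma tildeGraph_adj_of_ne (hx : x ≠ A) (hy : y ≠ A) :
    (tildeGraph G A B).Adj x y ↔ G.Adj x y := by
  simp only [tildeGraph, hx, hy, false_and, or_self, not_false_eq_true, iff_true,
    and_iff_right_iff_imp]
  exact G.ne_of_adj

lemma tildeGraph_adj_left (hxA : x ≠ A) (hxB : x ≠ B) :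
    (tildeGraph G A B).Adj x A ↔ Xor (G.Adj x A) (G.Adj x B) := by
  simp only [tildeGraph, hxA, hxB, false_and, true_and, ne_eq, not_false_eq_true, false_or]
  rw [xor_iff_iff_not]

end GraphOperations

section CycleMaps

variable {V : Type} {l : ℕ} [NeZero l] {G : SimpleGraph V} {A B : V} {f : Fin l → V}

lemma isCycleMap_iff :
    IsCycleMap G l f ↔ Function.Injective f ∧ ∀ i, G.Adj (f i) (f (i + 1)) := by
  simp only [IsCycleMap, cyclicSucc_eq_add_one]

def polygonSymm (c : Fin l) (b : Bool) (j : Fin l) : Fin l :=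
  if b then c - j else j - c

lemma polygonSymm_injective (c : Fin l) (b : Bool) : Function.Injective (polygonSymm c b) := by
  cases b
  exacts [sub_left_injective, sub_right_injective]

@[simp]
lemma polygonSymm_self (c : Fin l) (b : Bool) : polygonSymm c b c = 0 := by
  cases b <;> simp [polygonSymm]

@[simp]
lemma polygonSymm_add_sign (c : Fin l) (b : Bool) :
    polygonSymm c b (c + if b then -1 else 1) = 1 := by
  cases b <;> simp [polygonSymm]

lemma IsCycleMap.comp_polygonSymm (hf : IsCycleMap G l f) (c : Fin l) (b : Bool) :
    IsCycleMap G l (f ∘ polygonSymm c b) := by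
  rw [isCycleMap_iff] at hf ⊢
  refine ⟨hf.1.comp (polygonSymm_injective c b), fun i => ?_⟩
  cases b
  · simpa [polygonSymm, sub_add_eq_add_sub] using hf.2 (i - c)
  · simpa [polygonSymm, sub_add_eq_add_sub, sub_sub] using (hf.2 (c - (i + 1))).symm

lemma isCycleMap_toggleEdge_iff (h : G.Adj A B) :
    IsCycleMap (toggleEdge G A B) l f ↔
      IsCycleMap G l f ∧ ¬ ∃ i, s(f i, f (i + 1)) = s(A, B) := by
  simp only [isCycleMap_iff, not_exists]
  constructor
  · rintro ⟨hinj, hadj⟩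
    have hne : ∀ i, s(f i, f (i + 1)) ≠ s(A, B) := fun i he =>
      (toggleEdge_adj_of_eq (G.ne_of_adj h) he).mp (hadj i) h
    exact ⟨⟨hinj, fun i => (toggleEdge_adj_of_ne (hne i)).mp (hadj i)⟩, hne⟩
  · rintro ⟨⟨hinj, hadj⟩, hne⟩
    exact ⟨hinj, fun i => (toggleEdge_adj_of_ne (hne i)).mpr (hadj i)⟩

variable [Fintype V]

/-- Maps tracing an `l`-cycle `A, B, f 2, …, f (l - 1)` of `G`, except that the edge `AB`
itself is not required. -/
noncomputable def openCycleMaps (G : SimpleGraph V) (A B : V) (l : ℕ) [NeZero l] :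
    Finset (Fin l → V) :=
  {f | Function.Injective f ∧ f 0 = A ∧ f 1 = B ∧ ∀ i ≠ 0, G.Adj (f i) (f (i + 1))}

lemma isCycleMap_iff_mem_openCycleMaps (h : G.Adj A B) (h0 : f 0 = A) (h1 : f 1 = B) :
    IsCycleMap G l f ↔ f ∈ openCycleMaps G A B l := by
  simp only [isCycleMap_iff, openCycleMaps, mem_filter, mem_univ, true_and, h0, h1]
  refine ⟨fun hf => ⟨hf.1, fun i _ => hf.2 i⟩, fun hf => ⟨hf.1, fun i => ?_⟩⟩
  by_cases hi : i = 0
  · simpa [hi, h0, h1] using h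
  · exact hf.2 i hi

lemma eq_of_comp_polygonSymm_eq (hl : 3 ≤ l) {p p' : Fin l → V}
    (hp : p ∈ openCycleMaps G A B l) (hp' : p' ∈ openCycleMaps G A B l) {c c' : Fin l}
    {b b' : Bool} (h : p ∘ polygonSymm c b = p' ∘ polygonSymm c' b') :
    p = p' ∧ c = c' ∧ b = b' := by
  simp only [openCycleMaps, mem_filter, mem_univ, true_and] at hp hp'
  have hf := hp.1.comp (polygonSymm_injective c b)
  obtain rfl : c = c' := hf <| by
    rw [congrFun h c']
    simp [hp.2.1, hp'.2.1]
  obtain rfl : b = b' := by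
    have hs := hf (a₁ := c + if b then -1 else 1) (a₂ := c + if b' then -1 else 1) <| by
      rw [congrFun h (c + if b' then -1 else 1)]
      simp [hp.2.2.1, hp'.2.2.1]
    have h2 : (2 : Fin l) ≠ 0 := Fin.ofNat_ne_zero_of_lt (by norm_num) hl
    have h1 : (1 : Fin l) ≠ -1 := fun h1 => h2 (by linear_combination h1)
    cases b <;> cases b' <;> simp [h1, h1.symm] at hs ⊢
  have hsurj := Finite.injective_iff_surjective.mp (polygonSymm_injective c b)
  exact ⟨hsurj.injective_comp_right h, rfl, rfl⟩

lemma exists_comp_polygonSymm_eq (h : G.Adj A B) (hf : IsCycleMap G l f) {i : Fin l}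
    (hi : s(f i, f (i + 1)) = s(A, B)) :
    ∃ p ∈ openCycleMaps G A B l, ∃ c b, p ∘ polygonSymm c b = f := by
  rcases Sym2.eq_iff.mp hi with ⟨hA, hB⟩ | ⟨hB, hA⟩
  · refine ⟨f ∘ polygonSymm (-i) false, ?_, i, false, ?_⟩
    · refine (isCycleMap_iff_mem_openCycleMaps h ?_ ?_).mp (hf.comp_polygonSymm _ _) <;>
        simp [polygonSymm, hA, hB, add_comm]
    · funext j
      simp [polygonSymm]
  · refine ⟨f ∘ polygonSymm (i + 1) true, ?_, i + 1, true, ?_⟩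
    · refine (isCycleMap_iff_mem_openCycleMaps h ?_ ?_).mp (hf.comp_polygonSymm _ _) <;>
        simp [polygonSymm, hA, hB]
    · funext j
      simp [polygonSymm]

lemma card_isCycleMap_through_edge (hl : 3 ≤ l) (h : G.Adj A B) :
    #{f : Fin l → V | IsCycleMap G l f ∧ ∃ i, s(f i, f (i + 1)) = s(A, B)} =
      2 * l * #(openCycleMaps G A B l) := by
  have hprod : #(openCycleMaps G A B l ×ˢ (univ : Finset (Fin l × Bool))) =
      2 * l * #(openCycleMaps G A B l) := by
    simp [card_product]
    ring
  rw [← hprod]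
  symm
  refine card_nbij (fun x => x.1 ∘ polygonSymm x.2.1 x.2.2) ?_ ?_ ?_
  · rintro ⟨p, c, b⟩ hp
    simp only [coe_product, Set.mem_prod, mem_coe] at hp
    have h01 := hp.1
    simp only [openCycleMaps, mem_filter, mem_univ, true_and] at h01
    have hcyc := (isCycleMap_iff_mem_openCycleMaps h h01.2.1 h01.2.2.1).mpr hp.1
    simp only [mem_coe, mem_filter, mem_univ, true_and]
    refine ⟨hcyc.comp_polygonSymm c b, if b then c - 1 else c, ?_⟩
    cases b <;> simp [polygonSymm, h01.2.1, h01.2.2.1, Sym2.eq_swap]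
  · rintro ⟨p, c, b⟩ hp ⟨p', c', b'⟩ hp' heq
    simp only [coe_product, Set.mem_prod, mem_coe] at hp hp'
    obtain ⟨rfl, rfl, rfl⟩ := eq_of_comp_polygonSymm_eq hl hp.1 hp'.1 heq
    rfl
  · intro f hf
    simp only [mem_coe, mem_filter, mem_univ, true_and] at hf
    obtain ⟨hcyc, i, hi⟩ := hf
    obtain ⟨p, hp, c, b, rfl⟩ := exists_comp_polygonSymm_eq h hcyc hi
    exact ⟨(p, c, b), by simp [hp], rfl⟩

lemma cycleCount_eq_cycleCount_toggleEdge_add (hl : 3 ≤ l) (h : G.Adj A B) :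
    cycleCount G l = cycleCount (toggleEdge G A B) l + #(openCycleMaps G A B l) := by
  have hsplit := card_filter_add_card_filter_not (s := {f : Fin l → V | IsCycleMap G l f})
    (fun f => ∃ i, s(f i, f (i + 1)) = s(A, B))
  simp only [filter_filter, ← isCycleMap_toggleEdge_iff h] at hsplit
  rw [cycleCount, cycleCount, ← hsplit, card_isCycleMap_through_edge hl h, add_comm,
    Nat.add_mul_div_left _ _ (by omega)]

end CycleMaps

section PathMaps

variable {V : Type} {l : ℕ} [NeZero l] {G : SimpleGraph V} {A B : V} {f : Fin l → V}

/-- `B = f 1, f 2, …, f (l - 1)` is a path of `G` avoiding `A = f 0`. -/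
def IsPathMap (G : SimpleGraph V) (A B : V) (f : Fin l → V) : Prop :=
  Function.Injective f ∧ f 0 = A ∧ f 1 = B ∧ ∀ i ≠ 0, i + 1 ≠ 0 → G.Adj (f i) (f (i + 1))

lemma isPathMap_tildeGraph_iff : IsPathMap (tildeGraph G A B) A B f ↔ IsPathMap G A B f := by
  refine and_congr_right fun hinj => and_congr_right fun h0 => and_congr_right fun _ =>
    forall₃_congr fun i hi hi' => tildeGraph_adj_of_ne ?_ ?_
  · rwa [← h0, hinj.ne_iff]
  · rwa [← h0, hinj.ne_iff]

lemma IsPathMap.last_ne (hl : 3 ≤ l) (hf : IsPathMap G A B f) : f (-1) ≠ A ∧ f (-1) ≠ B := by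
  obtain ⟨hinj, h0, h1, -⟩ := hf
  have h2 : (2 : Fin l) ≠ 0 := Fin.ofNat_ne_zero_of_lt (by norm_num) hl
  rw [← h0, ← h1, hinj.ne_iff, hinj.ne_iff]
  exact ⟨neg_ne_zero.mpr (Fin.ofNat_ne_zero_of_lt (k := 1) (by norm_num) (by omega)),
    fun h => h2 (by linear_combination -h)⟩

/-- Reverses the cyclic order of the positions `1, 2, …, l - 1`, fixing `0` and `1`. -/
def pathReversal (j : Fin l) : Fin l :=
  if j = 0 ∨ j = 1 then j else 1 - j

lemma pathReversal_of_ne {j : Fin l} (h0 : j ≠ 0) (h1 : j ≠ 1) : pathReversal j = 1 - j :=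
  if_neg (by tauto)

lemma pathReversal_involutive : Function.Involutive (pathReversal : Fin l → Fin l) := by
  intro j
  by_cases hj : j = 0 ∨ j = 1
  · simp [pathReversal, hj]
  · rw [not_or] at hj
    rw [pathReversal_of_ne hj.1 hj.2, pathReversal_of_ne, sub_sub_cancel]
    · exact fun h => hj.2 (sub_eq_zero.mp h).symm
    · exact fun h => hj.1 (sub_eq_self.mp h)

lemma IsPathMap.comp_pathReversal (hl : 3 ≤ l) (hf : IsPathMap G A B f)
    (hB : G.Adj (f (-1)) B) :
    IsPathMap G A B (f ∘ pathReversal) ∧ G.Adj ((f ∘ pathReversal) (-1)) B := by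
  obtain ⟨hinj, h0, h1, hadj⟩ := hf
  have h10 : (1 : Fin l) ≠ 0 := Fin.ofNat_ne_zero_of_lt (k := 1) (by norm_num) (by omega)
  have h20 : (2 : Fin l) ≠ 0 := Fin.ofNat_ne_zero_of_lt (by norm_num) hl
  have h21 : (2 : Fin l) ≠ 1 := fun h => h10 (by linear_combination h)
  refine ⟨⟨hinj.comp pathReversal_involutive.injective, by simp [pathReversal, h0],
    by simp [pathReversal, h1], fun i hi0 hi => ?_⟩, ?_⟩
  · by_cases hi1 : i = 1
    · subst hi1
      rw [Function.comp_apply, Function.comp_apply, one_add_one_eq_two,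
        pathReversal_of_ne h20 h21]
      simpa [pathReversal, h1, show (1 : Fin l) - 2 = -1 by ring] using hB.symm
    · have hi1' : i + 1 ≠ 1 := fun h => hi0 (by linear_combination h)
      rw [Function.comp_apply, Function.comp_apply, pathReversal_of_ne hi0 hi1,
        pathReversal_of_ne hi hi1']
      have := hadj (-i) (neg_ne_zero.mpr hi0) (fun h => hi1 (by linear_combination -h))
      rw [G.adj_comm]
      convert this using 3 <;> ring
  · have hn0 : (-1 : Fin l) ≠ 0 := neg_ne_zero.mpr h10
    have hn1 : (-1 : Fin l) ≠ 1 := fun h => h20 (by linear_combination -h)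
    rw [Function.comp_apply, pathReversal_of_ne hn0 hn1, sub_neg_eq_add, one_add_one_eq_two,
      ← one_add_one_eq_two, G.adj_comm, ← h1]
    exact hadj 1 h10 (by rwa [one_add_one_eq_two])

variable [Fintype V]

lemma even_card_isPathMap_adj_last (hl : 4 ≤ l) :
    Even #{f : Fin l → V | IsPathMap G A B f ∧ G.Adj (f (-1)) B} := by
  have h10 : (1 : Fin l) ≠ 0 := Fin.ofNat_ne_zero_of_lt (k := 1) (by norm_num) (by omega)
  have h20 : (2 : Fin l) ≠ 0 := Fin.ofNat_ne_zero_of_lt (k := 2) (by norm_num) (by omega)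
  have h30 : (3 : Fin l) ≠ 0 := Fin.ofNat_ne_zero_of_lt (by norm_num) hl
  refine even_card_of_involution (· ∘ pathReversal) (fun f hf => ?_) (fun f _ => ?_)
    (fun f hf heq => ?_) <;> simp only [mem_filter, mem_univ, true_and] at *
  · exact hf.1.comp_pathReversal (by omega) hf.2
  · rw [Function.comp_assoc, pathReversal_involutive.comp_self, Function.comp_id]
  · have h2 := hf.1.1 (congrFun heq 2)
    rw [pathReversal_of_ne h20 (fun h => h10 (by linear_combination h))] at h2
    exact h30 (by linear_combination -h2)

lemma mem_openCycleMaps_iff (hl : 2 ≤ l) :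
    f ∈ openCycleMaps G A B l ↔ IsPathMap G A B f ∧ G.Adj (f (-1)) A := by
  simp only [openCycleMaps, mem_filter, mem_univ, true_and, IsPathMap]
  constructor
  · rintro ⟨hinj, h0, h1, hadj⟩
    have h := hadj (-1) (neg_ne_zero.mpr (Fin.ofNat_ne_zero_of_lt (k := 1) (by norm_num) hl))
    rw [neg_add_cancel, h0] at h
    exact ⟨⟨hinj, h0, h1, fun i hi _ => hadj i hi⟩, h⟩
  · rintro ⟨⟨hinj, h0, h1, hadj⟩, hA⟩
    refine ⟨hinj, h0, h1, fun i hi => ?_⟩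
    by_cases hi' : i + 1 = 0
    · rwa [hi', h0, eq_neg_of_add_eq_zero_left hi']
    · exact hadj i hi hi'

lemma openCycleMaps_toggleEdge (hl : 3 ≤ l) :
    openCycleMaps (toggleEdge G A B) A B l = openCycleMaps G A B l := by
  have h2 : (2 : Fin l) ≠ 0 := Fin.ofNat_ne_zero_of_lt (by norm_num) hl
  ext f
  simp only [openCycleMaps, mem_filter, mem_univ, true_and]
  refine and_congr_right fun hinj => and_congr_right fun h0 => and_congr_right fun h1 =>
    forall₂_congr fun i hi => toggleEdge_adj_of_ne ?_
  rw [Ne, Sym2.eq_iff, ← h0, ← h1]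
  simp only [hinj.eq_iff]
  rintro (⟨rfl, -⟩ | ⟨rfl, h10⟩)
  · exact hi rfl
  · exact h2 (by linear_combination h10)

lemma natCast_card_openCycleMaps_tildeGraph (hl : 4 ≤ l) :
    (#(openCycleMaps (tildeGraph G A B) A B l) : ZMod 2) = #(openCycleMaps G A B l) := by
  set s : Finset (Fin l → V) := {f | IsPathMap G A B f}
  have hG : openCycleMaps G A B l = {f ∈ s | G.Adj (f (-1)) A} := by
    ext f
    simp [s, mem_openCycleMaps_iff (show 2 ≤ l by omega)]
  have hG' : openCycleMaps (tildeGraph G A B) A B l =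
      {f ∈ s | Xor (G.Adj (f (-1)) A) (G.Adj (f (-1)) B)} := by
    ext f
    simp only [s, mem_openCycleMaps_iff (show 2 ≤ l by omega), isPathMap_tildeGraph_iff,
      mem_filter, mem_univ, true_and]
    refine and_congr_right fun hf => ?_
    exact tildeGraph_adj_left (hf.last_ne (by omega)).1 (hf.last_ne (by omega)).2
  have hB : Even #{f ∈ s | G.Adj (f (-1)) B} := by
    simpa only [s, filter_filter] using even_card_isPathMap_adj_last hl
  rw [hG', hG, natCast_card_filter_xor, (ZMod.natCast_eq_zero_iff_even).mpr hB, add_zero]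

lemma cycleCount_sub_cycleCount_toggleEdge (hl : 3 ≤ l) (hAB : A ≠ B) :
    (cycleCount G l : ZMod 2) - cycleCount (toggleEdge G A B) l = #(openCycleMaps G A B l) := by
  by_cases h : G.Adj A B
  · rw [cycleCount_eq_cycleCount_toggleEdge_add hl h]
    push_cast
    ring
  · have h' : (toggleEdge G A B).Adj A B := (toggleEdge_adj_of_eq hAB rfl).mpr h
    rw [cycleCount_eq_cycleCount_toggleEdge_add hl h', toggleEdge_toggleEdge,
      openCycleMaps_toggleEdge hl, Nat.cast_add, sub_add_cancel_left, ZMod.neg_eq_self_mod_two]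

end PathMaps

theorem cycleCount_fourTerm_mod_two {V : Type} [Fintype V] (G : SimpleGraph V)
    (l : ℕ) (hl : 4 ≤ l) (A B : V) (hAB : A ≠ B) :
    (cycleCount G l : ℤ) - (cycleCount (toggleEdge G A B) l : ℤ) ≡
      (cycleCount (tildeGraph G A B) l : ℤ) -
        (cycleCount (toggleEdge (tildeGraph G A B) A B) l : ℤ) [ZMOD 2] := by
  have : NeZero l := ⟨by omega⟩
  refine (ZMod.intCast_eq_intCast_iff _ _ 2).mp ?_
  push_cast
  rw [cycleCount_sub_cycleCount_toggleEdge (by omega) hAB,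
    cycleCount_sub_cycleCount_toggleEdge (by omega) hAB, natCast_card_openCycleMaps_tildeGraph hl]
end

section
/- Let Γ be a finite simple graph with an orientation o, let S be a subset of the vertices, and let o′ be the orientation obtained from o by reversing the direction of every edge having exactly one endpoint in S (all other edges unchanged). Then every cycle of even length in Γ has the same sign with respect to o as with respect to o′. -/
open Finset
open scoped Classical

/-! Reversing the edges across `S` multiplies the sign of an edge `xy` by `ε x * ε y`, where
`ε = -1` on `S` and `1` off it. Around a cycle every vertex is an endpoint of exactly two edges,
so the product of these factors is a square of `±1`, and the sign of the cycle is unchanged. -/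

lemma cyclicSucc_eq_finRotate {m : ℕ} (a : Fin m) : cyclicSucc a = finRotate m a := by
  obtain _ | m := m
  · exact a.elim0
  · ext
    simp [cyclicSucc, finRotate_apply, Fin.val_add]

lemma prod_comp_cyclicSucc {M : Type*} [CommMonoid M] {m : ℕ} (g : Fin m → M) :
    ∏ i, g (cyclicSucc i) = ∏ i, g i := by
  simp only [cyclicSucc_eq_finRotate]
  exact Equiv.prod_comp (finRotate m) g

lemma prod_mul_cyclicSucc {M : Type*} [CommMonoid M] {m : ℕ} (a g : Fin m → M) :
    ∏ i, a i * (g i * g (cyclicSucc i)) = (∏ i, a i) * (∏ i, g i) ^ 2 := by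
  rw [prod_mul_distrib, prod_mul_distrib, prod_comp_cyclicSucc, sq]

noncomputable def edgeSign {V : Type} (o : V → V → Prop) (x y : V) : ℤ :=
  if o x y then -1 else 1

noncomputable def memSign {V : Type} (S : Set V) (x : V) : ℤ :=
  if x ∈ S then -1 else 1

lemma memSign_mul_self {V : Type} (S : Set V) (x : V) : memSign S x * memSign S x = 1 := by
  unfold memSign
  split_ifs <;> norm_num

lemma cycleSign_eq_prod_edgeSign {V : Type} {l : ℕ} (o : V → V → Prop) (f : Fin l → V) :
    cycleSign o f = ∏ i, edgeSign o (f i) (f (cyclicSucc i)) := by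
  simp [cycleSign, edgeSign, prod_ite]

lemma edgeSign_eq_mul_memSign {V : Type} {o o' : V → V → Prop} {S : Set V} {x y : V}
    (hflip : Xor' (x ∈ S) (y ∈ S) → (o' x y ↔ ¬ o x y))
    (hkeep : ¬ Xor' (x ∈ S) (y ∈ S) → (o' x y ↔ o x y)) :
    edgeSign o' x y = edgeSign o x y * (memSign S x * memSign S y) := by
  unfold edgeSign memSign
  by_cases hx : x ∈ S <;> by_cases hy : y ∈ S <;> simp_all [Xor'] <;> split_ifs <;> simp_all

theorem cycleSign_eq_of_flip_across_set_general {V : Type} (G : SimpleGraph V)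
    (o o' : V → V → Prop)
    (S : Set V)
    (hflip : ∀ x y, G.Adj x y → Xor' (x ∈ S) (y ∈ S) → (o' x y ↔ ¬ o x y))
    (hkeep : ∀ x y, G.Adj x y → ¬ Xor' (x ∈ S) (y ∈ S) → (o' x y ↔ o x y))
    (l : ℕ) (f : Fin l → V) (hf : IsCycleMap G l f) :
    cycleSign o f = cycleSign o' f := by
  have hS : (∏ i, memSign S (f i)) ^ 2 = 1 := by
    rw [← prod_pow]
    exact prod_eq_one fun i _ => by rw [sq, memSign_mul_self]
  calc cycleSign o f
      = (∏ i, edgeSign o (f i) (f (cyclicSucc i))) * (∏ i, memSign S (f i)) ^ 2 := by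
        rw [hS, mul_one, cycleSign_eq_prod_edgeSign]
    _ = ∏ i, edgeSign o' (f i) (f (cyclicSucc i)) := by
        rw [← prod_mul_cyclicSucc]
        exact prod_congr rfl fun i _ =>
          (edgeSign_eq_mul_memSign (hflip _ _ (hf.2 i)) (hkeep _ _ (hf.2 i))).symm
    _ = cycleSign o' f := (cycleSign_eq_prod_edgeSign o' f).symm

theorem cycleSign_eq_of_flip_across_set {V : Type} (G : SimpleGraph V)
    (o o' : V → V → Prop) (ho : IsOrientation G o) (ho' : IsOrientation G o')
    (S : Set V)
    (hflip : ∀ x y, G.Adj x y → Xor' (x ∈ S) (y ∈ S) → (o' x y ↔ ¬ o x y))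
    (hkeep : ∀ x y, G.Adj x y → ¬ Xor' (x ∈ S) (y ∈ S) → (o' x y ↔ o x y))
    (l : ℕ) (hl : Even l) (f : Fin l → V) (hf : IsCycleMap G l f) :
    cycleSign o f = cycleSign o' f :=
  cycleSign_eq_of_flip_across_set_general G o o' S hflip hkeep l f hf
end

section
/- For every finite simple graph Γ and every pair of distinct vertices A, B, the determinant over the field ZMod 2 of the adjacency matrix of Γ̃_AB equals the determinant over ZMod 2 of the adjacency matrix of Γ. In particular, w_C(Γ̃_AB) = w_C(Γ), i.e., the invariant w_C satisfies the 2-term relation for graphs. -/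
open Finset
open scoped Classical

/-!
Over `ZMod 2`, the adjacency matrix of `Γ̃_AB` is the congruence `E M Eᵀ` of the adjacency
matrix `M` of `Γ` by the transvection `E` adding row `B` to row `A`: off the diagonal, row `A`
becomes row `A` plus row `B` (an entry `M_BC = 1` toggles the edge `AC`), and the new diagonal
entry `M_AB + M_BA` vanishes in characteristic two. Transvections have determinant one.
-/

namespace Matrix

variable {n R : Type*} [Fintype n] [DecidableEq n] [CommRing R]

theorem transvection_mul_apply (i j : n) (c : R) (M : Matrix n n R) (x y : n) :
    (transvection i j c * M) x y = M x y + if x = i then c * M j y else 0 := by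
  by_cases hx : x = i
  · subst hx; simp
  · simp [hx]

theorem mul_transvection_apply (i j : n) (c : R) (M : Matrix n n R) (x y : n) :
    (M * transvection i j c) x y = M x y + if y = j then c * M x i else 0 := by
  by_cases hy : y = j
  · subst hy; simp
  · simp [hy]

theorem det_transvection_mul_mul_transvection {i j : n} (hij : i ≠ j) (c : R)
    (M : Matrix n n R) : det (transvection i j c * M * transvection j i c) = det M := by
  rw [det_mul, det_mul, det_transvection_of_ne _ _ hij, det_transvection_of_ne _ _ hij.symm,
    one_mul, mul_one]

end Matrix

theorem ite_iff_not_eq_add_ite (p q : Prop) [Decidable p] [Decidable q] :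
    (if p ↔ ¬q then (1 : ZMod 2) else 0) = (if p then 1 else 0) + if q then 1 else 0 := by
  by_cases hp : p <;> by_cases hq : q <;> simp [hp, hq]; decide

section TildeGraph

variable {V : Type} (G : SimpleGraph V) (A B : V)

theorem tildeGraph_adjMatrix_apply (x y : V) :
    (tildeGraph G A B).adjMatrix (ZMod 2) x y = G.adjMatrix (ZMod 2) x y +
      (if x = A then G.adjMatrix (ZMod 2) B y else 0) +
      (if y = A then G.adjMatrix (ZMod 2) x B else 0) := by
  by_cases hxy : x = y
  · subst hxy
    split_ifs with hx <;>
      simp [SimpleGraph.adjMatrix_apply, hx, G.adj_comm B A, CharTwo.add_self_eq_zero]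
  · have hadj : (tildeGraph G A B).Adj x y ↔
        (G.Adj x y ↔ ¬((x = A ∧ y ≠ B ∧ G.Adj y B) ∨ (y = A ∧ x ≠ B ∧ G.Adj x B))) :=
      and_iff_right hxy
    simp only [SimpleGraph.adjMatrix_apply, hadj]
    have hB : ∀ z, (z ≠ B ∧ G.Adj z B) ↔ G.Adj z B :=
      fun _ => and_iff_right_of_imp G.ne_of_adj
    by_cases hx : x = A <;> by_cases hy : y = A
    · exact absurd (hx.trans hy.symm) hxy
    · subst hx
      simp only [hB, hy, G.adj_comm B y, true_and, false_and, or_false, if_true, if_false,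
        add_zero]
      exact ite_iff_not_eq_add_ite (G.Adj x y) (G.Adj y B)
    · subst hy
      simp only [hB, hx, true_and, false_and, false_or, if_true, if_false, add_zero]
      exact ite_iff_not_eq_add_ite (G.Adj x y) (G.Adj x B)
    · simp [hx, hy]

theorem tildeGraph_adjMatrix_eq [Fintype V] :
    (tildeGraph G A B).adjMatrix (ZMod 2) =
      Matrix.transvection A B 1 * G.adjMatrix (ZMod 2) * Matrix.transvection B A 1 := by
  ext x y
  rw [tildeGraph_adjMatrix_apply, Matrix.mul_transvection_apply, Matrix.transvection_mul_apply,
    Matrix.transvection_mul_apply]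
  by_cases hx : x = A <;> simp [hx, add_assoc]

end TildeGraph

theorem adjMatrix_det_tildeGraph_eq {V : Type} [Fintype V] (G : SimpleGraph V)
    (A B : V) (hAB : A ≠ B) :
    ((tildeGraph G A B).adjMatrix (ZMod 2)).det = (G.adjMatrix (ZMod 2)).det ∧
      wC (tildeGraph G A B) = wC G := by
  have hdet : ((tildeGraph G A B).adjMatrix (ZMod 2)).det = (G.adjMatrix (ZMod 2)).det := by
    rw [tildeGraph_adjMatrix_eq, Matrix.det_transvection_mul_mul_transvection hAB]
  exact ⟨hdet, by rw [wC, wC, hdet]⟩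
end
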